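/- Let H : U → ℝ be differentiable on an open connected subset U of ℝ² such that the partial derivative ∂H/∂x is never zero on U. Then ∂H/∂x is either strictly positive on all of U or strictly negative on all of U. -/

import Mathlib

/-!
Along every line segment `t ↦ q + t • v` in `U`, the derivative `t ↦ ∂ᵥH (q + t • v)` has the
Darboux property and never vanishes, so it has constant sign, and by the mean value theorem that
sign is the sign of `H (q + δ • v) - H (q - δ • v)`. This difference is continuous in `q`, so the
set where `∂ᵥH > 0` is open, and likewise the set where `∂ᵥH < 0`; connectedness of `U` finishes.
-/

open Set Filter Topology

theorem deriv_pos_iff_lt_of_forall_ne_zero {f f' : ℝ → ℝ} {a b x : ℝ} (hab : a < b)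
    (hf : ∀ t ∈ Icc a b, HasDerivAt f (f' t) t) (hf' : ∀ t ∈ Icc a b, f' t ≠ 0)
    (hx : x ∈ Icc a b) : 0 < f' x ↔ f a < f b := by
  obtain ⟨c, hc, hfc⟩ := exists_hasDerivAt_eq_slope f f' hab
    (fun t ht => (hf t ht).continuousAt.continuousWithinAt)
    (fun t ht => hf t (Ioo_subset_Icc_self ht))
  have hc' : c ∈ Icc a b := Ioo_subset_Icc_self hc
  have hslope : 0 < f' c ↔ f a < f b := by
    rw [hfc, div_pos_iff_of_pos_right (sub_pos.2 hab), sub_pos]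
  rw [← hslope]
  rcases hasDerivWithinAt_forall_lt_or_forall_gt_of_forall_ne (convex_Icc a b)
    (fun t ht => (hf t ht).hasDerivWithinAt) hf' with hneg | hpos
  · exact iff_of_false (hneg x hx).not_gt (hneg c hc').not_gt
  · exact iff_of_true (hpos x hx) (hpos c hc')

section Directional

variable {E : Type*} [NormedAddCommGroup E] [NormedSpace ℝ E]

theorem DifferentiableAt.hasDerivAt_comp_add_smul {H : E → ℝ} {q v : E} {t : ℝ}
    (hH : DifferentiableAt ℝ H (q + t • v)) :
    HasDerivAt (fun s : ℝ => H (q + s • v)) (fderiv ℝ H (q + t • v) v) t := by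
  have := hH.hasFDerivAt.comp_hasDerivAt t (((hasDerivAt_id t).smul_const v).const_add q)
  rwa [one_smul] at this

theorem IsOpen.exists_eventually_forall_add_smul_mem {U : Set E} (hU : IsOpen U) {p : E}
    (hp : p ∈ U) (v : E) : ∃ δ > (0 : ℝ), ∀ᶠ q in 𝓝 p, ∀ t ∈ Icc (-δ) δ, q + t • v ∈ U := by
  obtain ⟨r, hr, hball⟩ := Metric.isOpen_iff.1 hU p hp
  obtain ⟨δ, hδ, hδv⟩ := exists_pos_mul_lt (half_pos hr) ‖v‖
  refine ⟨δ, hδ, ?_⟩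
  filter_upwards [Metric.ball_mem_nhds p (half_pos hr)] with q hq t ht
  apply hball
  have htv : ‖t • v‖ ≤ ‖v‖ * δ := by
    rw [norm_smul, mul_comm, Real.norm_eq_abs]
    exact mul_le_mul_of_nonneg_left (abs_le.2 ht) (norm_nonneg v)
  calc dist (q + t • v) p ≤ dist (q + t • v) q + dist q p := dist_triangle _ _ _
    _ = ‖t • v‖ + dist q p := by rw [dist_self_add_left]
    _ < r / 2 + r / 2 := add_lt_add_of_le_of_lt (htv.trans hδv.le) hq
    _ = r := add_halves r

variable {U : Set E} {H : E → ℝ} {v : E}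

theorem eventually_pos_fderiv_apply (hU : IsOpen U) (hH : ∀ p ∈ U, DifferentiableAt ℝ H p)
    (h : ∀ p ∈ U, fderiv ℝ H p v ≠ 0) {p : E} (hp : p ∈ U) (hpos : 0 < fderiv ℝ H p v) :
    ∀ᶠ q in 𝓝 p, 0 < fderiv ℝ H q v := by
  obtain ⟨δ, hδ, htube⟩ := hU.exists_eventually_forall_add_smul_mem hp v
  have hsign : ∀ q, (∀ t ∈ Icc (-δ) δ, q + t • v ∈ U) →
      (0 < fderiv ℝ H q v ↔ H (q + (-δ) • v) < H (q + δ • v)) := by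
    intro q hq
    simpa using deriv_pos_iff_lt_of_forall_ne_zero (x := 0) (by linarith)
      (fun t ht => (hH _ (hq t ht)).hasDerivAt_comp_add_smul) (fun t ht => h _ (hq t ht))
      ⟨by linarith, hδ.le⟩
  have hp_tube := htube.self_of_nhds
  have hcont : ∀ t ∈ Icc (-δ) δ, ContinuousAt (fun q => H (q + t • v)) p := fun t ht =>
    (hH _ (hp_tube t ht)).continuousAt.comp (f := (· + t • v))
      (continuous_add_const _).continuousAt
  filter_upwards [htube, (hcont (-δ) ⟨le_rfl, by linarith⟩).eventually_lt
    (hcont δ ⟨by linarith, le_rfl⟩) ((hsign p hp_tube).1 hpos)] with q hq hlt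
  exact (hsign q hq).2 hlt

theorem isOpen_setOf_pos_fderiv_apply (hU : IsOpen U) (hH : ∀ p ∈ U, DifferentiableAt ℝ H p)
    (h : ∀ p ∈ U, fderiv ℝ H p v ≠ 0) : IsOpen {p | p ∈ U ∧ 0 < fderiv ℝ H p v} := by
  refine isOpen_iff_mem_nhds.2 fun p ⟨hp, hpos⟩ => ?_
  filter_upwards [hU.mem_nhds hp, eventually_pos_fderiv_apply hU hH h hp hpos] with q hq hqpos
  exact ⟨hq, hqpos⟩

theorem IsPreconnected.fderiv_apply_pos_or_neg (hconn : IsPreconnected U) (hU : IsOpen U)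
    (hH : ∀ p ∈ U, DifferentiableAt ℝ H p) (h : ∀ p ∈ U, fderiv ℝ H p v ≠ 0) :
    (∀ p ∈ U, 0 < fderiv ℝ H p v) ∨ (∀ p ∈ U, fderiv ℝ H p v < 0) := by
  have hpos := isOpen_setOf_pos_fderiv_apply hU hH h
  have hneg := isOpen_setOf_pos_fderiv_apply (H := -H) hU (fun p hp => (hH p hp).neg)
    (fun p hp => by simpa [fderiv_neg] using h p hp)
  simp only [fderiv_neg, neg_apply, neg_pos] at hneg
  rcases hconn.subset_or_subset hpos hneg
    (disjoint_left.2 fun p hp hp' => hp.2.not_gt hp'.2)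
    (fun p hp => (h p hp).lt_or_gt.elim (fun hlt => Or.inr ⟨hp, hlt⟩) fun hgt => Or.inl ⟨hp, hgt⟩)
    with hsub | hsub
  · exact Or.inl fun p hp => (hsub hp).2
  · exact Or.inr fun p hp => (hsub hp).2

end Directional

/-- On an open connected `U ⊆ ℝ²`, if `H` is differentiable on `U` and `∂H/∂x` never
vanishes on `U`, then `∂H/∂x` has constant sign on `U`. -/
theorem stmt7 (U : Set (ℝ × ℝ)) (hU : IsOpen U) (hconn : IsConnected U)
    (H : ℝ × ℝ → ℝ) (hH : ∀ p ∈ U, DifferentiableAt ℝ H p)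
    (h : ∀ p ∈ U, fderiv ℝ H p (1, 0) ≠ 0) :
    (∀ p ∈ U, 0 < fderiv ℝ H p (1, 0)) ∨
    (∀ p ∈ U, fderiv ℝ H p (1, 0) < 0) :=
  hconn.isPreconnected.fderiv_apply_pos_or_neg hU hH h
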